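/- Sample-path dominance by induction over events (core of Lemma 2): Let ι be the index set of network nodes and let U, V : ℕ → ι → ℝ be event-indexed state sequences of two coupled policies with V 0 k ≤ U 0 k for every node k. Suppose there are sequences j : ℕ → ι of updated nodes and s, t : ℕ → ℝ of generation times such that for every n: U (n+1) equals U n except that its (j n)-th component is max (U n (j n)) (s n), V (n+1) equals V n except that its (j n)-th component is max (V n (j n)) (t n), and either t n ≤ s n, or t n ≤ U n (j n). Then V n k ≤ U n k for every n ∈ ℕ and every node k. -/

import Mathlib

open Function

theorem max_le_max_of_le_of_le_or_le {α : Type*} [LinearOrder α] {a b s t : α}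
    (hab : a ≤ b) (hts : t ≤ s ∨ t ≤ b) : max a t ≤ max b s := by
  rcases hts with hts | htb
  · exact max_le_max hab hts
  · exact max_le (le_max_of_le_left hab) (le_max_of_le_left htb)

theorem update_max_le_update_max {ι α : Type*} [DecidableEq ι] [LinearOrder α]
    {u v : ι → α} {i : ι} {s t : α} (hvu : v ≤ u) (hts : t ≤ s ∨ t ≤ u i) :
    update v i (max (v i) t) ≤ update u i (max (u i) s) :=
  update_le_update_iff.2 ⟨max_le_max_of_le_of_le_or_le (hvu i) hts, fun k _ => hvu k⟩

/-- Sample-path dominance by induction over events (core of Lemma 2). -/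
theorem sample_path_dominance {ι : Type*} [DecidableEq ι]
    (U V : ℕ → ι → ℝ) (j : ℕ → ι) (s t : ℕ → ℝ)
    (h0 : ∀ k, V 0 k ≤ U 0 k)
    (hU : ∀ n, U (n + 1) = Function.update (U n) (j n) (max (U n (j n)) (s n)))
    (hV : ∀ n, V (n + 1) = Function.update (V n) (j n) (max (V n (j n)) (t n)))
    (hcond : ∀ n, t n ≤ s n ∨ t n ≤ U n (j n)) :
    ∀ n k, V n k ≤ U n k := by
  intro n
  induction n with
  | zero => exact h0
  | succ n ih =>
    rw [hU n, hV n]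
    exact update_max_le_update_max ih (hcond n)
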